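/- arXiv:2505.15428 — 2 statements merged into one kernel-verified Lean document; each statement's English description precedes it below -/
import Mathlib

section
/- Assume that for every s the quantity a_s = Σ_{i,j=1}^K (q_i(s) − q_j(s))⁴ is positive. Then among all probability vectors π with positive entries, the expected total squared error E[Σ_{i,j=1}^K (g̃_ij − g_ij)²] is minimized by the KL-sampling probabilities π_s = √(Σ_{i,j=1}^K (q_i(s) − q_j(s))⁴) / Σ_{s'=1}^N √(Σ_{i,j=1}^K (q_i(s') − q_j(s'))⁴). -/
open BigOperators Finset

private lemma key1 {n N : ℕ} (π : Fin N → ℝ) (w : Fin n → Fin N → ℝ) :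
    ∑ u : Fin n → Fin N, ∏ t : Fin n, (π (u t) * w t (u t)) =
      ∏ t : Fin n, ∑ s : Fin N, π s * w t s := by
  have := Finset.prod_univ_sum (fun _ : Fin n => (univ : Finset (Fin N)))
    (fun t s => π s * w t s)
  rw [Fintype.piFinset_univ] at this
  exact this.symm

private lemma key_norm {n N : ℕ} {π : Fin N → ℝ} (hπ : ∑ s : Fin N, π s = 1) :
    ∑ u : Fin n → Fin N, ∏ t : Fin n, π (u t) = 1 := by
  have := key1 (n := n) π (fun _ _ => 1)
  simpa [hπ] using this

private lemma key_single {n N : ℕ} {π : Fin N → ℝ} (hπ : ∑ s : Fin N, π s = 1)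
    (f : Fin N → ℝ) (t : Fin n) :
    ∑ u : Fin n → Fin N, (∏ r : Fin n, π (u r)) * f (u t) = ∑ s : Fin N, π s * f s := by
  have h1 : ∀ u : Fin n → Fin N, (∏ r : Fin n, π (u r)) * f (u t)
      = ∏ r : Fin n, (π (u r) * (if r = t then f (u r) else 1)) := by
    intro u
    rw [Finset.prod_mul_distrib, Finset.prod_ite_eq' univ t (fun r => f (u r))]
    simp
  have hk := key1 (n := n) π (fun r x => if r = t then f x else 1)
  rw [Finset.sum_congr rfl (fun u _ => h1 u), hk]
  rw [Finset.prod_eq_single t ?_ ?_]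
  · simp
  · intro r _ hr; simp [hr, hπ]
  · simp

private lemma key_pair {n N : ℕ} {π : Fin N → ℝ} (hπ : ∑ s : Fin N, π s = 1)
    (f : Fin N → ℝ) (t t' : Fin n) :
    ∑ u : Fin n → Fin N, (∏ r : Fin n, π (u r)) * (f (u t) * f (u t')) =
      if t = t' then ∑ s : Fin N, π s * f s * f s else (∑ s : Fin N, π s * f s) ^ 2 := by
  have h1 : ∀ u : Fin n → Fin N, (∏ r : Fin n, π (u r)) * (f (u t) * f (u t'))
      = ∏ r : Fin n, (π (u r) *
          ((if r = t then f (u r) else 1) * (if r = t' then f (u r) else 1))) := by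
    intro u
    rw [Finset.prod_mul_distrib, Finset.prod_mul_distrib,
      Finset.prod_ite_eq' univ t (fun r => f (u r)),
      Finset.prod_ite_eq' univ t' (fun r => f (u r))]
    simp [mul_assoc]
  have hk := key1 (n := n) π
    (fun r x => (if r = t then f x else 1) * (if r = t' then f x else 1))
  rw [Finset.sum_congr rfl (fun u _ => h1 u), hk]
  by_cases h : t = t'
  · subst h
    simp only [if_pos rfl]
    rw [Finset.prod_eq_single t ?_ ?_]
    · simp [mul_assoc]
    · intro r _ hr; simp [hr, hπ]
    · simp
  · simp only [if_neg h]
    set A : Fin n → ℝ := fun r => ∑ s : Fin N, π s *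
      ((if r = t then f s else 1) * (if r = t' then f s else 1)) with hA
    have ht' : t' ∈ univ.erase t := by simp [Ne.symm h]
    rw [← Finset.mul_prod_erase univ A (mem_univ t),
        ← Finset.mul_prod_erase (univ.erase t) A ht']
    have hAt : A t = ∑ s : Fin N, π s * f s := by simp [hA, h]
    have hAt' : A t' = ∑ s : Fin N, π s * f s := by simp [hA, Ne.symm h]
    have hrest : ∏ r ∈ (univ.erase t).erase t', A r = 1 := by
      apply Finset.prod_eq_one
      intro r hr
      have hr1 : r ≠ t' := (Finset.mem_erase.mp hr).1
      have hr2 : r ≠ t := (Finset.mem_erase.mp (Finset.mem_erase.mp hr).2).1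
      simp [hA, hr1, hr2, hπ]
    rw [hAt, hAt', hrest]; ring

private lemma moment {n N : ℕ} {π : Fin N → ℝ} (hπ : ∑ s : Fin N, π s = 1)
    (f : Fin N → ℝ) (g : ℝ) :
    ∑ u : Fin n → Fin N, (∏ r : Fin n, π (u r)) * (∑ t : Fin n, f (u t) - g) ^ 2
      = (n : ℝ) * (∑ s : Fin N, π s * f s * f s)
        + ((n : ℝ) ^ 2 - n) * (∑ s : Fin N, π s * f s) ^ 2
        - 2 * g * ((n : ℝ) * (∑ s : Fin N, π s * f s)) + g ^ 2 := by
  set M1 := ∑ s : Fin N, π s * f s with hM1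
  set M2 := ∑ s : Fin N, π s * f s * f s with hM2
  have expand : ∀ u : Fin n → Fin N,
      (∏ r : Fin n, π (u r)) * (∑ t : Fin n, f (u t) - g) ^ 2
      = (∑ t : Fin n, ∑ t' : Fin n, (∏ r : Fin n, π (u r)) * (f (u t) * f (u t')))
        - 2 * g * (∑ t : Fin n, (∏ r : Fin n, π (u r)) * f (u t))
        + g ^ 2 * (∏ r : Fin n, π (u r)) := by
    intro u
    set P := ∏ r : Fin n, π (u r) with hP
    set S := ∑ t : Fin n, f (u t) with hS
    have h2 : (∑ t : Fin n, ∑ t' : Fin n, P * (f (u t) * f (u t'))) = P * (S * S) := by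
      rw [hS, Finset.sum_mul_sum, Finset.mul_sum]
      exact Finset.sum_congr rfl fun t _ => by rw [Finset.mul_sum]
    have h3 : (∑ t : Fin n, P * f (u t)) = P * S := by
      rw [hS, Finset.mul_sum]
    rw [h2, h3]; ring
  rw [Finset.sum_congr rfl (fun u _ => expand u)]
  rw [Finset.sum_add_distrib, Finset.sum_sub_distrib]
  have e1 : ∑ u : Fin n → Fin N, ∑ t : Fin n, ∑ t' : Fin n,
      (∏ r : Fin n, π (u r)) * (f (u t) * f (u t'))
      = (n : ℝ) * M2 + ((n : ℝ) ^ 2 - n) * M1 ^ 2 := by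
    rw [Finset.sum_comm]
    have : ∀ t : Fin n, ∑ u : Fin n → Fin N, ∑ t' : Fin n,
        (∏ r : Fin n, π (u r)) * (f (u t) * f (u t'))
        = ∑ t' : Fin n, (if t = t' then M2 else M1 ^ 2) := by
      intro t
      rw [Finset.sum_comm]
      exact Finset.sum_congr rfl (fun t' _ => key_pair hπ f t t')
    rw [Finset.sum_congr rfl (fun t _ => this t)]
    have h2 : ∀ t : Fin n, ∑ t' : Fin n, (if t = t' then M2 else M1 ^ 2)
        = M1 ^ 2 * n + (M2 - M1 ^ 2) := by
      intro t
      have : ∀ t' : Fin n, (if t = t' then M2 else M1 ^ 2)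
          = M1 ^ 2 + (if t = t' then M2 - M1 ^ 2 else 0) := by
        intro t'; split <;> ring
      rw [Finset.sum_congr rfl (fun t' _ => this t'), Finset.sum_add_distrib,
        Finset.sum_ite_eq univ t (fun _ => M2 - M1 ^ 2)]
      simp [mul_comm]
    rw [Finset.sum_congr rfl (fun t _ => h2 t)]
    simp only [Finset.sum_const, card_univ, Fintype.card_fin, nsmul_eq_mul]
    ring
  have e2 : ∑ u : Fin n → Fin N, 2 * g * (∑ t : Fin n, (∏ r : Fin n, π (u r)) * f (u t))
      = 2 * g * ((n : ℝ) * M1) := by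
    rw [← Finset.mul_sum, Finset.sum_comm]
    rw [Finset.sum_congr rfl (fun t _ => key_single hπ f t)]
    simp only [Finset.sum_const, card_univ, Fintype.card_fin, nsmul_eq_mul]
    rw [hM1]
  have e3 : ∑ u : Fin n → Fin N, g ^ 2 * (∏ r : Fin n, π (u r)) = g ^ 2 := by
    rw [← Finset.mul_sum, key_norm hπ, mul_one]
  rw [e1, e2, e3]

/-- Assume `a_s = ∑_{i,j} (q_i(s) − q_j(s))⁴ > 0` for every `s`. Among all probability
vectors `π` with positive entries, the expected total squared error
`E π = E[∑_{i,j} (g̃_ij − g_ij)²]` (expectation over the i.i.d. indices drawn with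
probabilities `π`, modeled by the finite product distribution on `Fin n → Fin N`)
is minimized by the KL-sampling probabilities
`πKL s = √(a s) / ∑_{s'} √(a s')`.  In particular `πKL` is itself a probability vector
with positive entries. -/
theorem kl_sampling_minimizes_expected_error
    (K N n : ℕ) (hK : 0 < K) (hN : 0 < N) (hn : 0 < n)
    (q : Fin K → Fin N → ℝ)
    (ha : ∀ s : Fin N, 0 < ∑ i : Fin K, ∑ j : Fin K, (q i s - q j s) ^ 4)
    (E : (Fin N → ℝ) → ℝ)
    (hE : ∀ π : Fin N → ℝ,
      E π = ∑ u : Fin n → Fin N, (∏ t : Fin n, π (u t)) *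
        ∑ i : Fin K, ∑ j : Fin K,
          ((∑ t : Fin n, (1 / ((n : ℝ) * π (u t))) * (q i (u t) - q j (u t)) ^ 2)
            - ∑ s : Fin N, (q i s - q j s) ^ 2) ^ 2)
    (πKL : Fin N → ℝ)
    (hπKL : ∀ s : Fin N,
      πKL s = Real.sqrt (∑ i : Fin K, ∑ j : Fin K, (q i s - q j s) ^ 4) /
        ∑ s' : Fin N, Real.sqrt (∑ i : Fin K, ∑ j : Fin K, (q i s' - q j s') ^ 4)) :
    (∀ s, 0 < πKL s) ∧ (∑ s : Fin N, πKL s) = 1 ∧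
      ∀ π : Fin N → ℝ, (∀ s, 0 < π s) → (∑ s : Fin N, π s) = 1 →
        E πKL ≤ E π := by
  have hnR : (0:ℝ) < (n:ℝ) := by exact_mod_cast hn
  have hnne : (n:ℝ) ≠ 0 := ne_of_gt hnR
  set a : Fin N → ℝ := fun s => ∑ i : Fin K, ∑ j : Fin K, (q i s - q j s) ^ 4 with haa
  set C : ℝ := ∑ i : Fin K, ∑ j : Fin K, (∑ s : Fin N, (q i s - q j s) ^ 2) ^ 2 with hC
  -- the closed form of E
  have hEform : ∀ π : Fin N → ℝ, (∀ s, 0 < π s) → (∑ s : Fin N, π s) = 1 →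
      E π = (1/(n:ℝ)) * (∑ s : Fin N, a s / π s) - (1/(n:ℝ)) * C := by
    intro π hpos hsum
    have hπne : ∀ s, π s ≠ 0 := fun s => ne_of_gt (hpos s)
    rw [hE π]
    have swap : (∑ u : Fin n → Fin N, (∏ t : Fin n, π (u t)) *
        ∑ i : Fin K, ∑ j : Fin K,
          ((∑ t : Fin n, (1 / ((n : ℝ) * π (u t))) * (q i (u t) - q j (u t)) ^ 2)
            - ∑ s : Fin N, (q i s - q j s) ^ 2) ^ 2)
        = ∑ i : Fin K, ∑ j : Fin K, ∑ u : Fin n → Fin N, (∏ t : Fin n, π (u t)) *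
          ((∑ t : Fin n, (1 / ((n : ℝ) * π (u t))) * (q i (u t) - q j (u t)) ^ 2)
            - ∑ s : Fin N, (q i s - q j s) ^ 2) ^ 2 := by
      simp only [Finset.mul_sum]
      rw [Finset.sum_comm]
      exact Finset.sum_congr rfl fun i _ => Finset.sum_comm
    rw [swap]
    have key_ij : ∀ i j : Fin K, (∑ u : Fin n → Fin N, (∏ t : Fin n, π (u t)) *
          ((∑ t : Fin n, (1 / ((n : ℝ) * π (u t))) * (q i (u t) - q j (u t)) ^ 2)
            - ∑ s : Fin N, (q i s - q j s) ^ 2) ^ 2)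
        = (1/(n:ℝ)) * (∑ s : Fin N, (q i s - q j s) ^ 4 / π s)
          - (1/(n:ℝ)) * (∑ s : Fin N, (q i s - q j s) ^ 2) ^ 2 := by
      intro i j
      have hm := moment (n := n) hsum
        (fun s => (1 / ((n : ℝ) * π s)) * (q i s - q j s) ^ 2)
        (∑ s : Fin N, (q i s - q j s) ^ 2)
      rw [hm]
      have hM1 : (∑ s : Fin N, π s * ((1 / ((n : ℝ) * π s)) * (q i s - q j s) ^ 2))
          = (∑ s : Fin N, (q i s - q j s) ^ 2) / n := by
        rw [Finset.sum_div]
        refine Finset.sum_congr rfl fun s _ => ?_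
        have h0 := hπne s
        field_simp
      have hM2 : (∑ s : Fin N, π s * ((1 / ((n : ℝ) * π s)) * (q i s - q j s) ^ 2)
            * ((1 / ((n : ℝ) * π s)) * (q i s - q j s) ^ 2))
          = (1/(n:ℝ)^2) * ∑ s : Fin N, (q i s - q j s) ^ 4 / π s := by
        rw [Finset.mul_sum]
        refine Finset.sum_congr rfl fun s _ => ?_
        have := hπne s
        field_simp
      rw [hM1, hM2]
      set A := ∑ s : Fin N, (q i s - q j s) ^ 4 / π s
      set g := ∑ s : Fin N, (q i s - q j s) ^ 2
      field_simp
      ring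
    rw [Finset.sum_congr rfl fun i _ => Finset.sum_congr rfl fun j _ => key_ij i j]
    have hsplit : (∑ i : Fin K, ∑ j : Fin K,
        ((1/(n:ℝ)) * (∑ s : Fin N, (q i s - q j s) ^ 4 / π s)
          - (1/(n:ℝ)) * (∑ s : Fin N, (q i s - q j s) ^ 2) ^ 2))
        = (1/(n:ℝ)) * (∑ i : Fin K, ∑ j : Fin K, ∑ s : Fin N, (q i s - q j s) ^ 4 / π s)
          - (1/(n:ℝ)) * C := by
      rw [hC]
      simp only [Finset.mul_sum, Finset.sum_sub_distrib]
    rw [hsplit]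
    have hswap2 : (∑ i : Fin K, ∑ j : Fin K, ∑ s : Fin N, (q i s - q j s) ^ 4 / π s)
        = ∑ s : Fin N, a s / π s := by
      rw [Finset.sum_congr rfl fun i (_ : i ∈ Finset.univ) =>
        (Finset.sum_comm : (∑ j : Fin K, ∑ s : Fin N, (q i s - q j s) ^ 4 / π s) = _)]
      rw [Finset.sum_comm]
      refine Finset.sum_congr rfl fun s _ => ?_
      have : a s = ∑ i : Fin K, ∑ j : Fin K, (q i s - q j s) ^ 4 := rfl
      rw [this]
      simp only [Finset.sum_div]
    rw [hswap2]
  -- basic facts about a and πKL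
  have hsq : ∀ s, 0 < Real.sqrt (a s) := fun s => Real.sqrt_pos.mpr (ha s)
  set T : ℝ := ∑ s' : Fin N, Real.sqrt (a s') with hT
  have hTpos : 0 < T := by
    refine Finset.sum_pos (fun s _ => hsq s) ?_
    exact Finset.univ_nonempty_iff.mpr (Fin.pos_iff_nonempty.mp hN)
  have hKLpos : ∀ s, 0 < πKL s := by
    intro s; rw [hπKL s]; exact div_pos (hsq s) hTpos
  have hKLsum : (∑ s : Fin N, πKL s) = 1 := by
    rw [Finset.sum_congr rfl fun s _ => hπKL s, ← Finset.sum_div]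
    exact div_self (ne_of_gt hTpos)
  refine ⟨hKLpos, hKLsum, ?_⟩
  intro π hpos hsum
  rw [hEform πKL hKLpos hKLsum, hEform π hpos hsum]
  have hΦKL : (∑ s : Fin N, a s / πKL s) = T ^ 2 := by
    have : ∀ s : Fin N, a s / πKL s = Real.sqrt (a s) * T := by
      intro s
      have hrf : (∑ i : Fin K, ∑ j : Fin K, (q i s - q j s) ^ 4) = a s := rfl
      rw [hπKL s, hrf, div_div_eq_mul_div, div_eq_iff (ne_of_gt (hsq s))]
      have hms : Real.sqrt (a s) * Real.sqrt (a s) = a s :=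
        Real.mul_self_sqrt (le_of_lt (ha s))
      conv_lhs => rw [← hms]
      ring
    rw [Finset.sum_congr rfl fun s _ => this s, ← Finset.sum_mul, sq]
  have hCS : T ^ 2 ≤ ∑ s : Fin N, a s / π s := by
    have h := Finset.sum_mul_sq_le_sq_mul_sq Finset.univ
      (fun s => Real.sqrt (a s / π s)) (fun s => Real.sqrt (π s))
    have h1 : ∀ s : Fin N, Real.sqrt (a s / π s) * Real.sqrt (π s) = Real.sqrt (a s) := by
      intro s
      rw [← Real.sqrt_mul (div_nonneg (le_of_lt (ha s)) (le_of_lt (hpos s))),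
        div_mul_cancel₀ _ (ne_of_gt (hpos s))]
    have h2 : ∀ s : Fin N, Real.sqrt (a s / π s) ^ 2 = a s / π s := by
      intro s; exact Real.sq_sqrt (div_nonneg (le_of_lt (ha s)) (le_of_lt (hpos s)))
    have h3 : ∀ s : Fin N, Real.sqrt (π s) ^ 2 = π s := by
      intro s; exact Real.sq_sqrt (le_of_lt (hpos s))
    rw [Finset.sum_congr rfl fun s _ => h1 s] at h
    rw [Finset.sum_congr rfl fun s _ => h2 s, Finset.sum_congr rfl fun s _ => h3 s,
      hsum, mul_one] at h
    exact h
  have : (∑ s : Fin N, a s / πKL s) ≤ ∑ s : Fin N, a s / π s := by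
    rw [hΦKL]; exact hCS
  have hfrac : (0:ℝ) ≤ 1/(n:ℝ) := by positivity
  exact sub_le_sub_right (mul_le_mul_of_nonneg_left this hfrac) _
end

section
/- Under the KL-sampling probabilities π_s = √(Σ_{i,j=1}^K (q_i(s) − q_j(s))⁴) / Σ_{s'=1}^N √(Σ_{i,j=1}^K (q_i(s') − q_j(s'))⁴) (assuming all these quantities under the square roots are positive), the minimal expected total squared error equals E[Σ_{i,j=1}^K (g̃_ij − g_ij)²] = (1/n) [ ( Σ_{s=1}^N √(Σ_{i,j=1}^K (q_i(s) − q_j(s))⁴) )² − Σ_{i,j=1}^K g_ij² ]. -/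
open BigOperators Finset

lemma sum_prod_eval {n N : ℕ} (F : Fin n → Fin N → ℝ) :
    ∑ u : Fin n → Fin N, ∏ t, F t (u t) = ∏ t, ∑ s, F t s := by
  rw [Finset.prod_univ_sum, Fintype.piFinset_univ]

lemma exp_one {n N : ℕ} (π : Fin N → ℝ) (hπ : ∑ s, π s = 1) :
    ∑ u : Fin n → Fin N, ∏ t, π (u t) = 1 := by
  rw [sum_prod_eval (fun _ s => π s)]
  simp [hπ]

lemma exp_single {n N : ℕ} (π : Fin N → ℝ) (hπ : ∑ s, π s = 1)
    (h : Fin N → ℝ) (t₀ : Fin n) :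
    ∑ u : Fin n → Fin N, (∏ t, π (u t)) * h (u t₀) = ∑ s, π s * h s := by
  have e1 : ∀ u : Fin n → Fin N, (∏ t, π (u t)) * h (u t₀)
      = ∏ t, (π (u t) * if t = t₀ then h (u t) else 1) := by
    intro u
    rw [Finset.prod_mul_distrib, Finset.prod_ite_eq' univ t₀ (fun t => h (u t))]
    simp
  simp_rw [e1]
  rw [sum_prod_eval (fun t s => π s * if t = t₀ then h s else 1)]
  have e2 : ∀ t : Fin n, (∑ s, π s * if t = t₀ then h s else 1)
      = if t = t₀ then ∑ s, π s * h s else 1 := by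
    intro t; by_cases ht : t = t₀ <;> simp [ht, hπ]
  simp_rw [e2]
  rw [Finset.prod_ite_eq' univ t₀ (fun _ => ∑ s, π s * h s)]
  simp

lemma exp_two {n N : ℕ} (π : Fin N → ℝ) (hπ : ∑ s, π s = 1)
    (h : Fin N → ℝ) (t₀ t₁ : Fin n) :
    ∑ u : Fin n → Fin N, (∏ t, π (u t)) * (h (u t₀) * h (u t₁))
      = if t₀ = t₁ then ∑ s, π s * (h s * h s) else (∑ s, π s * h s) ^ 2 := by
  by_cases ht : t₀ = t₁
  · subst ht
    simp only [if_pos rfl]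
    exact exp_single π hπ (fun s => h s * h s) t₀
  · rw [if_neg ht]
    have e1 : ∀ u : Fin n → Fin N, (∏ t, π (u t)) * (h (u t₀) * h (u t₁))
        = ∏ t, (π (u t) * ((if t = t₀ then h (u t) else 1) *
            (if t = t₁ then h (u t) else 1))) := by
      intro u
      simp_rw [Finset.prod_mul_distrib]
      rw [Finset.prod_ite_eq' univ t₀ (fun t => h (u t)),
        Finset.prod_ite_eq' univ t₁ (fun t => h (u t))]
      simp [mul_assoc]
    simp_rw [e1]
    rw [sum_prod_eval (fun t s => π s * ((if t = t₀ then h s else 1) *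
        (if t = t₁ then h s else 1)))]
    have e2 : ∀ t : Fin n, (∑ s, π s * ((if t = t₀ then h s else 1) *
        (if t = t₁ then h s else 1)))
        = (if t = t₀ then ∑ s, π s * h s else 1) *
          (if t = t₁ then ∑ s, π s * h s else 1) := by
      intro t
      by_cases h0 : t = t₀
      · have ht' : ¬ t = t₁ := h0 ▸ ht
        simp [h0, ht', ht]
      · by_cases h1 : t = t₁
        · have ht2 : ¬ t₁ = t₀ := fun hh => ht hh.symm
          simp [h0, h1, ht2]
        · simp [h0, h1, hπ]
    simp_rw [e2]
    rw [Finset.prod_mul_distrib,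
      Finset.prod_ite_eq' univ t₀ (fun _ => ∑ s, π s * h s),
      Finset.prod_ite_eq' univ t₁ (fun _ => ∑ s, π s * h s)]
    simp [sq]

lemma variance_core {n N : ℕ} (π h : Fin N → ℝ) (hπ : ∑ s, π s = 1) :
    ∑ u : Fin n → Fin N,
        (∏ t, π (u t)) * (∑ t, h (u t) - n * ∑ s, π s * h s) ^ 2
      = n * (∑ s, π s * (h s * h s)) - n * (∑ s, π s * h s) ^ 2 := by
  set μ := ∑ s, π s * h s with hμ
  set σ := ∑ s, π s * (h s * h s) with hσ
  have expand : ∀ u : Fin n → Fin N,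
      (∏ t, π (u t)) * (∑ t, h (u t) - n * μ) ^ 2
        = (∑ t, ∑ t', (∏ t'', π (u t'')) * (h (u t) * h (u t')))
          - 2 * (n * μ) * (∑ t, (∏ t'', π (u t'')) * h (u t))
          + (n * μ) ^ 2 * (∏ t, π (u t)) := by
    intro u
    have h1 : ∑ t : Fin n, ∑ t' : Fin n, (∏ t'', π (u t'')) * (h (u t) * h (u t'))
        = (∏ t, π (u t)) * (∑ t, h (u t)) ^ 2 := by
      simp_rw [← Finset.mul_sum]
      rw [sq, Finset.sum_mul_sum]
      simp_rw [Finset.mul_sum]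
    have h2 : ∑ t : Fin n, (∏ t'', π (u t'')) * h (u t)
        = (∏ t, π (u t)) * (∑ t, h (u t)) := by
      rw [← Finset.mul_sum]
    rw [h1, h2]; ring
  simp_rw [expand]
  rw [Finset.sum_add_distrib, Finset.sum_sub_distrib]
  have hA : ∑ u : Fin n → Fin N,
      ∑ t : Fin n, ∑ t' : Fin n, (∏ t'', π (u t'')) * (h (u t) * h (u t'))
      = n * σ + ((n : ℝ) ^ 2 - n) * μ ^ 2 := by
    rw [Finset.sum_comm]
    have : ∀ t : Fin n, ∑ u : Fin n → Fin N,
        ∑ t' : Fin n, (∏ t'', π (u t'')) * (h (u t) * h (u t'))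
        = ∑ t' : Fin n, (if t = t' then σ else μ ^ 2) := by
      intro t
      rw [Finset.sum_comm]
      exact Finset.sum_congr rfl fun t' _ => exp_two π hπ h t t'
    simp_rw [this]
    have : ∀ t t' : Fin n, (if t = t' then σ else μ ^ 2)
        = μ ^ 2 + (if t = t' then σ - μ ^ 2 else 0) := by
      intro t t'; split <;> ring
    simp_rw [this, Finset.sum_add_distrib, Finset.sum_ite_eq]
    simp
    ring
  have hB : ∑ u : Fin n → Fin N,
      2 * (n * μ) * (∑ t, (∏ t'', π (u t'')) * h (u t))
      = 2 * (n * μ) * (n * μ) := by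
    rw [← Finset.mul_sum]
    congr 1
    rw [Finset.sum_comm]
    have : ∀ t : Fin n, ∑ u : Fin n → Fin N, (∏ t'', π (u t'')) * h (u t) = μ :=
      fun t => exp_single π hπ h t
    simp_rw [this]
    rw [Finset.sum_const, Finset.card_univ, Fintype.card_fin, nsmul_eq_mul]
  have hC : ∑ u : Fin n → Fin N, (n * μ : ℝ) ^ 2 * (∏ t, π (u t))
      = (n * μ) ^ 2 := by
    rw [← Finset.mul_sum, exp_one π hπ, mul_one]
  rw [hA, hB, hC]
  ring

/-- Under the KL-sampling probabilities
`πKL s = √(∑_{i,j} (q_i(s) − q_j(s))⁴) / ∑_{s'} √(∑_{i,j} (q_i(s') − q_j(s'))⁴)`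
(assuming the quantities under the square roots are all positive), the minimal expected
total squared error equals
`E[∑_{i,j} (g̃_ij − g_ij)²]
  = (1/n) [ (∑_s √(∑_{i,j} (q_i(s) − q_j(s))⁴))² − ∑_{i,j} g_ij² ]`.
The expectation over the i.i.d. indices is modeled by the finite product distribution on
`Fin n → Fin N`. -/
theorem kl_sampling_minimal_error_value
    (K N n : ℕ) (hK : 0 < K) (hN : 0 < N) (hn : 0 < n)
    (q : Fin K → Fin N → ℝ)
    (ha : ∀ s : Fin N, 0 < ∑ i : Fin K, ∑ j : Fin K, (q i s - q j s) ^ 4)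
    (πKL : Fin N → ℝ)
    (hπKL : ∀ s : Fin N,
      πKL s = Real.sqrt (∑ i : Fin K, ∑ j : Fin K, (q i s - q j s) ^ 4) /
        ∑ s' : Fin N, Real.sqrt (∑ i : Fin K, ∑ j : Fin K, (q i s' - q j s') ^ 4)) :
    ∑ u : Fin n → Fin N, (∏ t : Fin n, πKL (u t)) *
        ∑ i : Fin K, ∑ j : Fin K,
          ((∑ t : Fin n, (1 / ((n : ℝ) * πKL (u t))) * (q i (u t) - q j (u t)) ^ 2)
            - ∑ s : Fin N, (q i s - q j s) ^ 2) ^ 2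
      = (1 / (n : ℝ)) *
          ((∑ s : Fin N, Real.sqrt (∑ i : Fin K, ∑ j : Fin K, (q i s - q j s) ^ 4)) ^ 2
            - ∑ i : Fin K, ∑ j : Fin K, (∑ s : Fin N, (q i s - q j s) ^ 2) ^ 2) := by
  have hnR : (0 : ℝ) < n := by exact_mod_cast hn
  set a : Fin N → ℝ := fun s => ∑ i : Fin K, ∑ j : Fin K, (q i s - q j s) ^ 4 with hadef
  set S : ℝ := ∑ s : Fin N, Real.sqrt (a s) with hSdef
  have hsq : ∀ s, 0 < Real.sqrt (a s) := fun s => Real.sqrt_pos.2 (ha s)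
  haveI : Nonempty (Fin N) := Fin.pos_iff_nonempty.mp hN
  have hS : 0 < S := Finset.sum_pos (fun s _ => hsq s) Finset.univ_nonempty
  have hπeq : ∀ s, πKL s = Real.sqrt (a s) / S := hπKL
  have hπpos : ∀ s, 0 < πKL s := fun s => by
    rw [hπeq s]; exact div_pos (hsq s) hS
  have hπ1 : ∑ s, πKL s = 1 := by
    simp_rw [hπeq]
    rw [← Finset.sum_div, ← hSdef, div_self hS.ne']
  -- swap sums
  have swap : ∑ u : Fin n → Fin N, (∏ t : Fin n, πKL (u t)) *
        ∑ i : Fin K, ∑ j : Fin K,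
          ((∑ t : Fin n, (1 / ((n : ℝ) * πKL (u t))) * (q i (u t) - q j (u t)) ^ 2)
            - ∑ s : Fin N, (q i s - q j s) ^ 2) ^ 2
      = ∑ i : Fin K, ∑ j : Fin K, ∑ u : Fin n → Fin N, (∏ t : Fin n, πKL (u t)) *
          ((∑ t : Fin n, (1 / ((n : ℝ) * πKL (u t))) * (q i (u t) - q j (u t)) ^ 2)
            - ∑ s : Fin N, (q i s - q j s) ^ 2) ^ 2 := by
    simp_rw [Finset.mul_sum]
    rw [Finset.sum_comm]
    exact Finset.sum_congr rfl fun i _ => Finset.sum_comm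
  rw [swap]
  have per : ∀ i j : Fin K,
      ∑ u : Fin n → Fin N, (∏ t : Fin n, πKL (u t)) *
          ((∑ t : Fin n, (1 / ((n : ℝ) * πKL (u t))) * (q i (u t) - q j (u t)) ^ 2)
            - ∑ s : Fin N, (q i s - q j s) ^ 2) ^ 2
      = (1 / (n : ℝ)) * ((∑ s, (q i s - q j s) ^ 4 / πKL s)
          - (∑ s : Fin N, (q i s - q j s) ^ 2) ^ 2) := by
    intro i j
    set h : Fin N → ℝ := fun s => (1 / ((n : ℝ) * πKL s)) * (q i s - q j s) ^ 2
      with hhdef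
    have hps : ∀ s : Fin N, πKL s * h s = (q i s - q j s) ^ 2 / n := by
      intro s
      rw [hhdef]
      have hπs := (hπpos s).ne'
      field_simp
    have hm : (∑ s : Fin N, (q i s - q j s) ^ 2) = n * ∑ s, πKL s * h s := by
      simp_rw [hps]
      rw [← Finset.sum_div, mul_div_cancel₀ _ hnR.ne']
    rw [hm, variance_core πKL h hπ1]
    have e1 : ∑ s, πKL s * (h s * h s)
        = ∑ s, (1 / (n : ℝ)^2) * ((q i s - q j s) ^ 4 / πKL s) := by
      refine Finset.sum_congr rfl fun s _ => ?_
      rw [hhdef]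
      have : (q i s - q j s) ^ 4 = ((q i s - q j s) ^ 2) ^ 2 := by ring
      rw [this]
      have hπs := (hπpos s).ne'
      field_simp
    have e2 : ∑ s, πKL s * h s = (1 / (n : ℝ)) * ∑ s : Fin N, (q i s - q j s) ^ 2 := by
      rw [hm]; field_simp
    rw [e1, e2, ← Finset.mul_sum]
    field_simp
  simp_rw [per]
  have key : ∑ i : Fin K, ∑ j : Fin K, ∑ s : Fin N, (q i s - q j s) ^ 4 / πKL s
      = S ^ 2 := by
    have e3 : ∀ i : Fin K, ∑ j : Fin K, ∑ s : Fin N, (q i s - q j s) ^ 4 / πKL s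
        = ∑ s : Fin N, ∑ j : Fin K, (q i s - q j s) ^ 4 / πKL s :=
      fun i => Finset.sum_comm
    simp_rw [e3]
    rw [Finset.sum_comm]
    have e4 : ∀ s : Fin N, ∑ i : Fin K, ∑ j : Fin K, (q i s - q j s) ^ 4 / πKL s
        = a s / πKL s := by
      intro s
      rw [hadef]
      simp_rw [← Finset.sum_div]
    simp_rw [e4]
    have e5 : ∀ s : Fin N, a s / πKL s = S * Real.sqrt (a s) := by
      intro s
      rw [hπeq s, div_div_eq_mul_div, div_eq_iff (hsq s).ne']
      rw [mul_assoc, Real.mul_self_sqrt (ha s).le]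
      ring
    simp_rw [e5]
    rw [← Finset.mul_sum, ← hSdef, sq]
  simp_rw [← Finset.mul_sum]
  congr 1
  simp_rw [Finset.sum_sub_distrib]
  rw [key]
end
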